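/- arXiv:2408.04490 — 2 statements merged into one kernel-verified Lean document; each statement's English description precedes it below -/
import Mathlib

section
/- Let (Q,*) be a quasigroup with Q = F_2^k and parastrophe \, let R = (r_1,…,r_n) ∈ Q^n and let M ∈ Q^l with SEBQ ciphertext C. Then when the SEBQ decryption algorithm is run on C with the same initial vector R, its internal values coincide with those of the encryption run at every stage: for all 1 ≤ i ≤ n and 0 ≤ j ≤ l, the value k_{i,j} computed during decryption (after the update step for each block) equals the value k_{i,j} computed during encryption; in particular the chained state vectors of the two algorithms agree before each block, S^{(j)} = R^{(j)} for j = 1,…,l. -/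
/-- Column of the SEBQ encryption for one block: `sebqCol mul r m i` is
`k_{i,j}` where `k_{0,j} = m` and `k_{i,j} = k_{i,j-1} * k_{i-1,j} = r_i * k_{i-1,j}`. -/
def sebqCol {Q : Type*} (mul : Q → Q → Q) {n : ℕ} (r : Fin n → Q) (m : Q) : ℕ → Q
  | 0 => m
  | i + 1 => if h : i < n then mul (r ⟨i, h⟩) (sebqCol mul r m i) else sebqCol mul r m i

/-- Updated chained state after encrypting one block: the column values
`k_{1,j},…,k_{n,j}` with the last one replaced by `k_{1,j} ⊕ ⋯ ⊕ k_{n,j}`. -/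
def sebqNext {Q : Type*} [AddCommMonoid Q] (mul : Q → Q → Q) {n : ℕ}
    (r : Fin n → Q) (m : Q) : Fin n → Q :=
  fun i => if i.val = n - 1 then ∑ j : Fin n, sebqCol mul r m (j.val + 1)
           else sebqCol mul r m (i.val + 1)

/-- SEBQ encryption (Algorithm 1): the ciphertext `C = (c_1,…,c_l)` with
`c_j = k_{n,j}`, chaining the updated state into the next block. -/
def sebqEnc {Q : Type*} [AddCommMonoid Q] (mul : Q → Q → Q) {n : ℕ} :
    (l : ℕ) → (Fin n → Q) → (Fin l → Q) → (Fin l → Q)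
  | 0, _, _ => Fin.elim0
  | l + 1, r, M =>
      Fin.cons (sebqCol mul r (M 0) n)
        (sebqEnc mul l (sebqNext mul r (M 0)) (fun i => M i.succ))

/-- Column of the SEBQ decryption for one block: `sebqDcol ld s c i` is
`k_{i,j}` where `k_{n,j} = c` and `k_{i-1,j} = k_{i,j-1} \ k_{i,j} = s_i \ k_{i,j}`. -/
def sebqDcol {Q : Type*} (ld : Q → Q → Q) {n : ℕ} (s : Fin n → Q) (c : Q) (i : ℕ) : Q :=
  ((List.ofFn s).drop i).foldr (fun rj acc => ld rj acc) c

/-- Updated chained state after decrypting one block. -/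
def sebqDNext {Q : Type*} [AddCommMonoid Q] (ld : Q → Q → Q) {n : ℕ}
    (s : Fin n → Q) (c : Q) : Fin n → Q :=
  fun i => if i.val = n - 1 then ∑ j : Fin n, sebqDcol ld s c (j.val + 1)
           else sebqDcol ld s c (i.val + 1)

/-- SEBQ decryption (Algorithm 2): the plaintext `M = (m_1,…,m_l)` with
`m_j = k_{1,j-1} \ k_{1,j}` (equivalently the bottom value `k_{0,j}` of the chain),
chaining the updated state into the next block. -/
def sebqDec {Q : Type*} [AddCommMonoid Q] (ld : Q → Q → Q) {n : ℕ} :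
    (l : ℕ) → (Fin n → Q) → (Fin l → Q) → (Fin l → Q)
  | 0, _, _ => Fin.elim0
  | l + 1, s, C =>
      Fin.cons (sebqDcol ld s (C 0) 0)
        (sebqDec ld l (sebqDNext ld s (C 0)) (fun i => C i.succ))

/-- Chained state of the encryption after processing a message prefix. -/
def sebqEncState {Q : Type*} [AddCommMonoid Q] (mul : Q → Q → Q) {n : ℕ} :
    (l : ℕ) → (Fin n → Q) → (Fin l → Q) → (Fin n → Q)
  | 0, r, _ => r
  | l + 1, r, M => sebqEncState mul l (sebqNext mul r (M 0)) (fun i => M i.succ)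

/-- Chained state of the decryption after processing a ciphertext prefix. -/
def sebqDecState {Q : Type*} [AddCommMonoid Q] (ld : Q → Q → Q) {n : ℕ} :
    (l : ℕ) → (Fin n → Q) → (Fin l → Q) → (Fin n → Q)
  | 0, s, _ => s
  | l + 1, s, C => sebqDecState ld l (sebqDNext ld s (C 0)) (fun i => C i.succ)


lemma sebqDcol_step {Q : Type*} (ld : Q → Q → Q) {n : ℕ} (r : Fin n → Q) (c : Q)
    (i : ℕ) (h : i < n) :
    sebqDcol ld r c i = ld (r ⟨i, h⟩) (sebqDcol ld r c (i + 1)) := by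
  unfold sebqDcol
  rw [List.drop_eq_getElem_cons (by simpa using h)]
  simp

lemma sebqDcol_col {Q : Type*} (mul ld : Q → Q → Q)
    (hld : ∀ x y z, mul x y = z ↔ y = ld x z) {n : ℕ} (r : Fin n → Q) (m : Q) :
    ∀ i, i ≤ n → sebqDcol ld r (sebqCol mul r m n) i = sebqCol mul r m i := by
  intro i
  induction' hni : n - i with d ih generalizing i
  · intro hi
    have : i = n := by omega
    subst this
    unfold sebqDcol
    rw [List.drop_eq_nil_of_le (by simp)]
    rfl
  · intro hi
    have h : i < n := by omega
    rw [sebqDcol_step ld r _ i h, ih (i + 1) (by omega) h]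
    have hstep : mul (r ⟨i, h⟩) (sebqCol mul r m i) = sebqCol mul r m (i + 1) := by
      simp [sebqCol, h]
    exact ((hld _ _ _).mp hstep).symm

lemma sebqDNext_eq {Q : Type*} [AddCommMonoid Q] (mul ld : Q → Q → Q)
    (hld : ∀ x y z, mul x y = z ↔ y = ld x z) {n : ℕ} (r : Fin n → Q) (m : Q) :
    sebqDNext ld r (sebqCol mul r m n) = sebqNext mul r m := by
  funext i
  unfold sebqDNext sebqNext
  have hc : ∀ j : Fin n, sebqDcol ld r (sebqCol mul r m n) (j.val + 1)
      = sebqCol mul r m (j.val + 1) :=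
    fun j => sebqDcol_col mul ld hld r m _ j.isLt
  split <;> simp [hc]

/-- when SEBQ decryption is run on the ciphertext C of M with the
same initial vector R, its internal (post-update) values `k_{i,j}` coincide with
those of the encryption run at every stage: the chained state vectors of the two
algorithms agree before each block, S^{(j)} = R^{(j)} for every j ≤ l and every
component 1 ≤ i ≤ n. -/
theorem sebq_states_agree (k n l : ℕ)
    (mul ld : (Fin k → ZMod 2) → (Fin k → ZMod 2) → (Fin k → ZMod 2))
    (hq1 : ∀ a b, ∃! x, mul a x = b)
    (hq2 : ∀ a b, ∃! y, mul y a = b)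
    (hld : ∀ x y z, mul x y = z ↔ y = ld x z)
    (R : Fin n → (Fin k → ZMod 2)) (M : Fin l → (Fin k → ZMod 2)) :
    ∀ (j : ℕ) (hj : j ≤ l) (i : Fin n),
      sebqDecState ld j R (fun t : Fin j => sebqEnc mul l R M (Fin.castLE hj t)) i =
        sebqEncState mul j R (fun t : Fin j => M (Fin.castLE hj t)) i := by
  clear hq1 hq2
  intro j
  induction j generalizing l R M with
  | zero => intro hj i; simp [sebqDecState, sebqEncState]
  | succ j ih =>
    intro hj i
    match l, M, hj with
    | l' + 1, M, hj =>
      have hj' : j ≤ l' := Nat.succ_le_succ_iff.mp hj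
      have h0 : Fin.castLE hj (0 : Fin (j + 1)) = (0 : Fin (l' + 1)) := rfl
      have hC0 : sebqEnc mul (l' + 1) R M (Fin.castLE hj 0) = sebqCol mul R (M 0) n := by
        rw [h0]; simp [sebqEnc]
      rw [sebqDecState, sebqEncState, hC0, h0,
        sebqDNext_eq mul ld hld R (M 0)]
      have hEnc : (fun t : Fin j =>
            sebqEnc mul (l' + 1) R M (Fin.castLE hj t.succ)) =
          fun t : Fin j => sebqEnc mul l' (sebqNext mul R (M 0))
            (fun i => M i.succ) (Fin.castLE hj' t) := by
        funext t
        have hcast : Fin.castLE hj t.succ = (Fin.castLE hj' t).succ := rfl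
        rw [hcast]
        simp [sebqEnc]
      rw [hEnc]
      exact ih l' (sebqNext mul R (M 0)) (fun t => M t.succ) hj' i
end

section
/- Let (Q,*) be a quasigroup with Q = F_2^k and parastrophe \, and fix an initial vector R ∈ Q^n. Then for every l ≥ 1 the SEBQ encryption map E_R : Q^l → Q^l (taking a message M to its ciphertext C) and the SEBQ decryption map D_R : Q^l → Q^l (taking a ciphertext C to its plaintext M) are mutually inverse; in particular both E_R and D_R are permutations (bijections) of Q^l. -/
section Aux
set_option linter.unusedSectionVars false
set_option linter.unusedVariables false
variable {Q : Type*} [AddCommMonoid Q] (mul ld : Q → Q → Q)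
variable {n : ℕ}

lemma sebqDcol_ge (s : Fin n → Q) (c : Q) {i : ℕ} (h : n ≤ i) :
    sebqDcol ld s c i = c := by
  unfold sebqDcol
  rw [List.drop_eq_nil_of_le (by simp [h])]
  rfl

lemma sebqDcol_succ (s : Fin n → Q) (c : Q) {i : ℕ} (h : i < n) :
    sebqDcol ld s c i = ld (s ⟨i, h⟩) (sebqDcol ld s c (i + 1)) := by
  unfold sebqDcol
  rw [List.drop_eq_getElem_cons (by simpa using h)]
  simp

variable (hld : ∀ x y z, mul x y = z ↔ y = ld x z)
include hld

lemma sebq_dcol_col (s : Fin n → Q) (m : Q) :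
    ∀ d i, i + d = n → sebqDcol ld s (sebqCol mul s m n) i = sebqCol mul s m i := by
  intro d
  induction d with
  | zero => intro i hi; simp only [Nat.add_zero] at hi; subst hi
            exact sebqDcol_ge ld s _ le_rfl
  | succ d ih =>
    intro i hi
    have hlt : i < n := by omega
    rw [sebqDcol_succ ld s _ hlt, ih (i + 1) (by omega)]
    have : sebqCol mul s m (i + 1) = mul (s ⟨i, hlt⟩) (sebqCol mul s m i) := by
      simp [sebqCol, hlt]
    rw [this, ← (hld _ _ _).mp rfl]

lemma sebq_col_dcol (s : Fin n → Q) (c : Q) :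
    ∀ i, i ≤ n → sebqCol mul s (sebqDcol ld s c 0) i = sebqDcol ld s c i := by
  intro i
  induction i with
  | zero => intro; rfl
  | succ i ih =>
    intro hi
    have hlt : i < n := by omega
    have : sebqCol mul s (sebqDcol ld s c 0) (i + 1)
        = mul (s ⟨i, hlt⟩) (sebqCol mul s (sebqDcol ld s c 0) i) := by
      simp [sebqCol, hlt]
    rw [this, ih (by omega), sebqDcol_succ ld s c hlt, (hld _ _ _).mpr rfl]

lemma sebqDNext_next (s : Fin n → Q) (m : Q) :
    sebqDNext ld s (sebqCol mul s m n) = sebqNext mul s m := by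
  funext i
  have key : ∀ j : Fin n, sebqDcol ld s (sebqCol mul s m n) (j.val + 1)
      = sebqCol mul s m (j.val + 1) := fun j =>
    sebq_dcol_col mul ld hld s m (n - (j.val + 1)) (j.val + 1) (by omega)
  unfold sebqDNext sebqNext
  simp only [key]

lemma sebqNext_dnext (s : Fin n → Q) (c : Q) :
    sebqNext mul s (sebqDcol ld s c 0) = sebqDNext ld s c := by
  funext i
  have key : ∀ j : Fin n, sebqCol mul s (sebqDcol ld s c 0) (j.val + 1)
      = sebqDcol ld s c (j.val + 1) := fun j =>
    sebq_col_dcol mul ld hld s c (j.val + 1) j.isLt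
  unfold sebqDNext sebqNext
  simp only [key]

lemma sebq_dec_enc : ∀ (l : ℕ) (r : Fin n → Q) (M : Fin l → Q),
    sebqDec ld l r (sebqEnc mul l r M) = M := by
  intro l
  induction l with
  | zero => intro r M; funext i; exact i.elim0
  | succ l ih =>
    intro r M
    funext i
    simp only [sebqEnc, sebqDec, Fin.cons_zero]
    refine Fin.cases ?_ ?_ i
    · rw [Fin.cons_zero]
      exact sebq_dcol_col mul ld hld r (M 0) n 0 (by omega)
    · intro j
      rw [Fin.cons_succ, sebqDNext_next mul ld hld]
      simp only [Fin.cons_succ]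
      rw [ih]

lemma sebq_enc_dec : ∀ (l : ℕ) (r : Fin n → Q) (C : Fin l → Q),
    sebqEnc mul l r (sebqDec ld l r C) = C := by
  intro l
  induction l with
  | zero => intro r C; funext i; exact i.elim0
  | succ l ih =>
    intro r C
    funext i
    simp only [sebqEnc, sebqDec, Fin.cons_zero]
    refine Fin.cases ?_ ?_ i
    · rw [Fin.cons_zero]
      rw [sebq_col_dcol mul ld hld r (C 0) n le_rfl, sebqDcol_ge ld r _ le_rfl]
    · intro j
      rw [Fin.cons_succ, sebqNext_dnext mul ld hld]
      simp only [Fin.cons_succ]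
      rw [ih]

end Aux

/-- for every l ≥ 1, the SEBQ encryption map E_R : Q^l → Q^l and
the SEBQ decryption map D_R : Q^l → Q^l are mutually inverse; in particular both
are permutations (bijections) of Q^l. -/
theorem sebq_enc_dec_inverse (k n : ℕ)
    (mul ld : (Fin k → ZMod 2) → (Fin k → ZMod 2) → (Fin k → ZMod 2))
    (hq1 : ∀ a b, ∃! x, mul a x = b)
    (hq2 : ∀ a b, ∃! y, mul y a = b)
    (hld : ∀ x y z, mul x y = z ↔ y = ld x z)
    (R : Fin n → (Fin k → ZMod 2)) :
    ∀ l : ℕ, 1 ≤ l →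
      Function.LeftInverse (sebqDec ld l R) (sebqEnc mul l R) ∧
      Function.RightInverse (sebqDec ld l R) (sebqEnc mul l R) ∧
      Function.Bijective (sebqEnc mul l R) ∧
      Function.Bijective (sebqDec ld l R) := by
  intro l _
  have h1 : Function.LeftInverse (sebqDec ld l R) (sebqEnc mul l R) :=
    fun M => sebq_dec_enc mul ld hld l R M
  have h2 : Function.RightInverse (sebqDec ld l R) (sebqEnc mul l R) :=
    fun C => sebq_enc_dec mul ld hld l R C
  exact ⟨h1, h2, ⟨h1.injective, h2.surjective⟩, ⟨h2.injective, h1.surjective⟩⟩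
end
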